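/- arXiv:2005.07187 — 2 statements merged into one kernel-verified Lean document; each statement's English description precedes it below -/
import Mathlib

section
/- Let L be a labeling of an n-element poset P that is not a linear extension. Let F_0 be the set of elements of P that are frozen with respect to L, and let F_1 be the set of elements of P that are frozen with respect to ∂(L). Then F_0 is a proper subset of F_1. -/
open scoped Classical

noncomputable section

abbrev Labeling (P : Type*) [Fintype P] : Type _ := P ≃ Fin (Fintype.card P)

variable {P : Type*} [Fintype P] [PartialOrder P]

def IsLinearExt (L : Labeling P) : Prop := ∀ x y : P, x ≤ y → L x ≤ L y

def lSucc (L : Labeling P) (v : P)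
    (h : (Finset.univ.filter fun y => v < y).Nonempty) : P :=
  L.symm (((Finset.univ.filter fun y => v < y).image L).min' (h.image _))

lemma lt_lSucc (L : Labeling P) (v : P)
    (h : (Finset.univ.filter fun y => v < y).Nonempty) : v < lSucc L v h := by
  have hmem := Finset.min'_mem ((Finset.univ.filter fun y => v < y).image L) (h.image _)
  obtain ⟨y, hy, hLy⟩ := Finset.mem_image.mp hmem
  have heq : lSucc L v h = y := by
    unfold lSucc
    rw [← hLy, Equiv.symm_apply_apply]
  rw [heq]
  exact (Finset.mem_filter.mp hy).2

def promChainFrom (L : Labeling P) (v : P) : List P :=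
  if h : (Finset.univ.filter fun y => v < y).Nonempty then
    v :: promChainFrom L (lSucc L v h)
  else [v]
termination_by (Finset.univ.filter fun y => v < y).card
decreasing_by
  apply Finset.card_lt_card
  refine (Finset.ssubset_iff_of_subset ?_).mpr ?_
  · intro z hz
    simp only [Finset.mem_filter, Finset.mem_univ, true_and] at *
    exact lt_trans (lt_lSucc L v h) hz
  · exact ⟨lSucc L v h, by simp [lt_lSucc L v h], by simp⟩

def promote (L : Labeling P) : Labeling P :=
  if h : Nonempty P then
    ((List.formPerm (promChainFrom L (L.symm ⟨0, @Fintype.card_pos P _ h⟩))).trans L).trans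
      (finRotate (Fintype.card P)).symm
  else L

/-- The label of `x` under `L`, as an integer in `{1, …, n}`. -/
def labelOf (L : Labeling P) (x : P) : ℕ := (L x : ℕ) + 1

/-- The largest `a ∈ {0, …, n}` such that for all `j ∈ {n−a+1, …, n}`, the set
`{x ∈ P : j ≤ L(x) ≤ n}` is an upper order ideal of `P`. -/
def frozenA (L : Labeling P) : ℕ :=
  sSup {a : ℕ | a ≤ Fintype.card P ∧
    ∀ j, Fintype.card P - a + 1 ≤ j → j ≤ Fintype.card P →
      IsUpperSet {x : P | j ≤ labelOf L x ∧ labelOf L x ≤ Fintype.card P}}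

/-- `x` is frozen with respect to `L` if `n − a + 1 ≤ L(x) ≤ n`, where `a` is as in `frozenA`. -/
def IsFrozen (L : Labeling P) (x : P) : Prop :=
  Fintype.card P - frozenA L + 1 ≤ labelOf L x

/-- A labeling of an `n`-element poset is tangled if `n ≥ 2` and `∂^{n−2}(L)` is
not a linear extension. -/
def IsTangled (L : Labeling P) : Prop :=
  2 ≤ Fintype.card P ∧ ¬ IsLinearExt (promote^[Fintype.card P - 2] L)

/-- A labeling of an `n`-element poset is `k`-untangled if `n ≥ k + 2` and
`∂^{n−k−2}(L)` is not a linear extension. -/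
def IsUntangled (k : ℕ) (L : Labeling P) : Prop :=
  k + 2 ≤ Fintype.card P ∧ ¬ IsLinearExt (promote^[Fintype.card P - k - 2] L)

/-- The comparability graph of a poset. -/
def compGraph (P : Type*) [PartialOrder P] : SimpleGraph P where
  Adj x y := x ≠ y ∧ (x ≤ y ∨ y ≤ x)
  symm := by
    constructor
    intro x y hxy
    exact ⟨hxy.1.symm, hxy.2.symm⟩
  loopless := by
    constructor
    intro x hx
    exact hx.1 rfl

/-- The standardization of an injective map from a finite type into a linear order:
the unique relabeling by `{1, …, n}` with the same relative order of values. -/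
def standardize {R β : Type*} [Fintype R] [LinearOrder β]
    (f : R → β) (hf : Function.Injective f) : R ≃ Fin (Fintype.card R) :=
  have hcard : (Finset.univ.image f).card = Fintype.card R := by
    rw [Finset.card_image_of_injective _ hf, Finset.card_univ]
  (Equiv.ofBijective (fun x => (⟨f x, by simp⟩ : ↥(Finset.univ.image f)))
    (by
      rw [Fintype.bijective_iff_injective_and_card]
      refine ⟨fun a b hab => hf (congrArg Subtype.val hab), ?_⟩
      rw [Fintype.card_coe, hcard])).trans
    ((Finset.univ.image f).orderIsoOfFin hcard).symm.toEquiv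

/-- The toggle operator `τ_{k+1}`: it swaps the labels `k+1` and `k+2` (i.e. the
`Fin`-labels `k` and `k+1`) unless `L⁻¹(k+1) <_P L⁻¹(k+2)`. -/
def toggle (L : Labeling P) (k : ℕ) : Labeling P :=
  if h : k + 1 < Fintype.card P then
    if L.symm ⟨k, Nat.lt_of_succ_lt h⟩ < L.symm ⟨k + 1, h⟩ then L
    else L.trans (Equiv.swap ⟨k, Nat.lt_of_succ_lt h⟩ ⟨k + 1, h⟩)
  else L

/-- An element `x` is `L`-golden if every element strictly above it has a larger label. -/
def IsGolden (L : Labeling P) (x : P) : Prop := ∀ y : P, x < y → L x < L y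

/-- The largest label `n` of an `n`-element poset, as an element of `Fin n`. -/
def topFin (P : Type*) [Fintype P] [Nonempty P] : Fin (Fintype.card P) :=
  ⟨Fintype.card P - 1, Nat.sub_lt Fintype.card_pos Nat.one_pos⟩

/-!
Away from its promotion chain, `∂` lowers every label by one; on the chain an element takes the
label of its `L`-successor minus one, and the maximal end of the chain gets label `n`. Let
`a = frozenA L`, which is `< n` because `L` is not a linear extension. On frozen elements labels
increase along `≤`, in particular towards the `L`-successor, so for `j ≥ n - a` every label
`≥ j + 1` of `L` becomes a label `≥ j` of `∂L`, and the labels `≥ j` of `∂L` form an upper set.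
Hence `frozenA (∂L) ≥ a + 1`. The frozen elements are those carrying the top `frozenA` labels, so
`F₀ ⊆ F₁`, and the inclusion is strict by counting.
-/

lemma val_finRotate_symm_zero_add_one {n : ℕ} [NeZero n] :
    ((finRotate n).symm 0 : ℕ) + 1 = n := by
  obtain ⟨m, rfl⟩ := Nat.exists_eq_succ_of_ne_zero (NeZero.ne n)
  rw [(Equiv.symm_apply_eq _).2 finRotate_last.symm, Fin.val_last]

lemma labelOf_le_card {Q : Type*} [Fintype Q] (L : Labeling Q) (x : Q) :
    labelOf L x ≤ Fintype.card Q :=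
  (L x).isLt

lemma ncard_setOf_le_val {Q : Type*} [Fintype Q] (L : Labeling Q) (k : ℕ) :
    {x : Q | k ≤ (L x : ℕ)}.ncard = Fintype.card Q - k := by
  have hsplit := Finset.card_filter_add_card_filter_not
    (s := (Finset.univ : Finset (Fin (Fintype.card Q)))) (fun i => (i : ℕ) < k)
  rw [Fin.card_filter_val_lt, Finset.card_univ, Fintype.card_fin] at hsplit
  rw [show {x : Q | k ≤ (L x : ℕ)} = L ⁻¹' {i | k ≤ (i : ℕ)} from rfl,
    Set.ncard_preimage_of_injective_subset_range L.injective (by simp), Set.ncard_eq_toFinset_card']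
  simp only [Set.toFinset_ofPred, not_lt] at hsplit ⊢
  omega

lemma exists_val_eq_zero {Q : Type*} [Fintype Q] [Nonempty Q] (L : Labeling Q) :
    ∃ v, (L v : ℕ) = 0 :=
  ⟨L.symm ⟨0, Fintype.card_pos⟩, by rw [Equiv.apply_symm_apply]⟩

section PromotionChain

variable (L : Labeling P)

lemma lSucc_le_of_lt {v : P} (h : (Finset.univ.filter fun y => v < y).Nonempty) {z : P}
    (hz : v < z) : L (lSucc L v h) ≤ L z := by
  rw [lSucc, Equiv.apply_symm_apply]
  exact Finset.min'_le _ _ (Finset.mem_image_of_mem _ (by simpa using hz))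

lemma promChainFrom_of_nonempty {v : P} (h : (Finset.univ.filter fun y => v < y).Nonempty) :
    promChainFrom L v = v :: promChainFrom L (lSucc L v h) := by
  rw [promChainFrom, dif_pos h]

lemma promChainFrom_of_not_nonempty {v : P}
    (h : ¬ (Finset.univ.filter fun y => v < y).Nonempty) : promChainFrom L v = [v] := by
  rw [promChainFrom, dif_neg h]

lemma exists_promChainFrom_eq_cons (v : P) : ∃ t, promChainFrom L v = v :: t := by
  by_cases h : (Finset.univ.filter fun y => v < y).Nonempty
  · exact ⟨_, promChainFrom_of_nonempty L h⟩
  · exact ⟨[], promChainFrom_of_not_nonempty L h⟩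

lemma le_of_mem_promChainFrom {v x : P} (hx : x ∈ promChainFrom L v) : v ≤ x := by
  induction v using promChainFrom.induct L with
  | case1 v h ih =>
    rw [promChainFrom_of_nonempty L h, List.mem_cons] at hx
    rcases hx with rfl | hx
    · exact le_rfl
    · exact (lt_lSucc L v h).le.trans (ih hx)
  | case2 v h =>
    rw [promChainFrom_of_not_nonempty L h, List.mem_singleton] at hx
    exact hx.ge

lemma formPerm_promChainFrom_apply {v x : P} (hx : x ∈ promChainFrom L v) :
    (promChainFrom L v).formPerm x =
      if h : (Finset.univ.filter fun y => x < y).Nonempty then lSucc L x h else v := by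
  induction v using promChainFrom.induct L with
  | case1 v h ih =>
    set w := lSucc L v h
    have hvw : v < w := lt_lSucc L v h
    obtain ⟨t, ht⟩ := exists_promChainFrom_eq_cons L w
    have hv_notMem : v ∉ promChainFrom L w := fun hv =>
      not_le_of_gt hvw (le_of_mem_promChainFrom L hv)
    rw [promChainFrom_of_nonempty L h, ht, List.formPerm_cons_cons, Equiv.Perm.mul_apply, ← ht]
    rw [promChainFrom_of_nonempty L h, List.mem_cons] at hx
    rcases hx with rfl | hx
    · rw [List.formPerm_apply_of_notMem hv_notMem, Equiv.swap_apply_left, dif_pos h]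
    · have hwx : w ≤ x := le_of_mem_promChainFrom L hx
      rw [ih hx]
      split_ifs with hx'
      · have hxs : x < lSucc L x hx' := lt_lSucc L x hx'
        exact Equiv.swap_apply_of_ne_of_ne (hvw.trans_le hwx |>.trans hxs).ne'
          (hwx.trans_lt hxs).ne'
      · exact Equiv.swap_apply_right v w
  | case2 v h =>
    rw [promChainFrom_of_not_nonempty L h, List.mem_singleton] at hx
    subst hx
    rw [promChainFrom_of_not_nonempty L h, List.formPerm_singleton, dif_neg h]
    rfl

end PromotionChain

section PromoteLabels

variable (L : Labeling P) {v : P}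

lemma labelOf_promote (hv : (L v : ℕ) = 0) (x : P) :
    labelOf (promote L) x =
      if (promChainFrom L v).formPerm x = v then Fintype.card P
      else (L ((promChainFrom L v).formPerm x) : ℕ) := by
  have hP : Nonempty P := ⟨v⟩
  have hv' : L.symm ⟨0, Fintype.card_pos⟩ = v := L.symm_apply_eq.2 (Fin.ext hv.symm)
  simp only [labelOf, promote, dif_pos hP, hv', Equiv.trans_apply]
  set y := (promChainFrom L v).formPerm x
  have : NeZero (Fintype.card P) := ⟨Fintype.card_ne_zero⟩
  split_ifs with hy
  · have h0 : L y = 0 := by rw [hy]; exact Fin.ext hv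
    rw [h0, val_finRotate_symm_zero_add_one]
  · have hLy : L y ≠ 0 := fun h0 => hy (L.injective (h0.trans (Fin.ext hv.symm)))
    rw [coe_finRotate_symm_of_ne_zero hLy]
    have : (L y : ℕ) ≠ 0 := Fin.val_ne_zero_iff.2 hLy
    omega

lemma labelOf_promote_of_notMem (hv : (L v : ℕ) = 0) {x : P} (hx : x ∉ promChainFrom L v) :
    labelOf (promote L) x + 1 = labelOf L x := by
  have hxv : x ≠ v := by
    rintro rfl
    obtain ⟨t, ht⟩ := exists_promChainFrom_eq_cons L x
    exact hx (ht ▸ List.mem_cons_self)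
  rw [labelOf_promote L hv, List.formPerm_apply_of_notMem hx, if_neg hxv, labelOf]

lemma labelOf_promote_of_mem_of_nonempty (hv : (L v : ℕ) = 0) {x : P}
    (hx : x ∈ promChainFrom L v) (h : (Finset.univ.filter fun y => x < y).Nonempty) :
    labelOf (promote L) x + 1 = labelOf L (lSucc L x h) := by
  have hne : lSucc L x h ≠ v := fun he =>
    not_le_of_gt (he ▸ lt_lSucc L x h) (le_of_mem_promChainFrom L hx)
  rw [labelOf_promote L hv, formPerm_promChainFrom_apply L hx, dif_pos h, if_neg hne, labelOf]

lemma labelOf_promote_of_mem_of_not_nonempty (hv : (L v : ℕ) = 0) {x : P}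
    (hx : x ∈ promChainFrom L v) (h : ¬ (Finset.univ.filter fun y => x < y).Nonempty) :
    labelOf (promote L) x = Fintype.card P := by
  rw [labelOf_promote L hv, formPerm_promChainFrom_apply L hx, dif_neg h, if_pos rfl]

end PromoteLabels

section Frozen

variable (L : Labeling P)

lemma frozenA_mem : frozenA L ∈ {a : ℕ | a ≤ Fintype.card P ∧
    ∀ j, Fintype.card P - a + 1 ≤ j → j ≤ Fintype.card P →
      IsUpperSet {x : P | j ≤ labelOf L x ∧ labelOf L x ≤ Fintype.card P}} :=
  Nat.sSup_mem ⟨0, Nat.zero_le _, fun j hj hj' => by omega⟩ ⟨_, fun _ ha => ha.1⟩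

lemma le_frozenA {a : ℕ} (ha : a ≤ Fintype.card P)
    (hup : ∀ j, Fintype.card P - a + 1 ≤ j → IsUpperSet {x : P | j ≤ labelOf L x}) :
    a ≤ frozenA L := by
  refine le_csSup ⟨_, fun _ hb => hb.1⟩ ⟨ha, fun j hj _ => ?_⟩
  simpa only [labelOf_le_card, and_true] using hup j hj

lemma IsFrozen.labelOf_le {L : Labeling P} {x y : P} (hx : IsFrozen L x) (hxy : x ≤ y) :
    labelOf L x ≤ labelOf L y :=
  ((frozenA_mem L).2 _ hx (labelOf_le_card L x) hxy ⟨le_rfl, labelOf_le_card L x⟩).1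

lemma frozenA_lt_card {L : Labeling P} (h : ¬ IsLinearExt L) : frozenA L < Fintype.card P := by
  refine (frozenA_mem L).1.lt_of_ne fun ha => h fun x y hxy => ?_
  have hx : IsFrozen L x := by unfold IsFrozen labelOf; omega
  have hmono := hx.labelOf_le hxy
  unfold labelOf at hmono
  exact Fin.le_def.2 (by omega)

lemma ncard_setOf_isFrozen : {x : P | IsFrozen L x}.ncard = frozenA L := by
  have ha := (frozenA_mem L).1
  simp only [IsFrozen, labelOf, Nat.add_le_add_iff_right, ncard_setOf_le_val]
  omega

end Frozen

section FrozenPromote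

variable {L : Labeling P}

lemma le_labelOf_promote {j : ℕ} (hj : Fintype.card P - frozenA L ≤ j) {y : P}
    (hy : j < labelOf L y) : j ≤ labelOf (promote L) y := by
  have : Nonempty P := ⟨y⟩
  obtain ⟨v, hv⟩ := exists_val_eq_zero L
  have hfrozen : IsFrozen L y := by unfold IsFrozen; omega
  by_cases hyc : y ∈ promChainFrom L v
  · by_cases hmax : (Finset.univ.filter fun z => y < z).Nonempty
    · have hsucc := labelOf_promote_of_mem_of_nonempty L hv hyc hmax
      have hmono := hfrozen.labelOf_le (lt_lSucc L y hmax).le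
      omega
    · rw [labelOf_promote_of_mem_of_not_nonempty L hv hyc hmax]
      exact hy.le.trans (labelOf_le_card L y)
  · have hoff := labelOf_promote_of_notMem L hv hyc
    omega

lemma isUpperSet_le_labelOf_promote {j : ℕ} (hj : Fintype.card P - frozenA L ≤ j) :
    IsUpperSet {x : P | j ≤ labelOf (promote L) x} := by
  intro x y hxy (hx : j ≤ labelOf (promote L) x)
  rcases hxy.eq_or_lt with rfl | hlt
  · exact hx
  refine le_labelOf_promote hj ?_
  have : Nonempty P := ⟨x⟩
  obtain ⟨v, hv⟩ := exists_val_eq_zero L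
  have hmax : (Finset.univ.filter fun z => x < z).Nonempty := ⟨y, by simpa using hlt⟩
  by_cases hxc : x ∈ promChainFrom L v
  · have hsucc := labelOf_promote_of_mem_of_nonempty L hv hxc hmax
    have hmin : labelOf L (lSucc L x hmax) ≤ labelOf L y :=
      Nat.succ_le_succ (lSucc_le_of_lt L hmax hlt)
    exact hx.trans_lt (by omega)
  · have hoff := labelOf_promote_of_notMem L hv hxc
    have hfrozen : IsFrozen L x := by unfold IsFrozen; omega
    have hmono := hfrozen.labelOf_le hlt.le
    exact hx.trans_lt (by omega)

lemma frozenA_lt_frozenA_promote (h : ¬ IsLinearExt L) : frozenA L < frozenA (promote L) :=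
  le_frozenA _ (frozenA_lt_card h) fun _ hj => isUpperSet_le_labelOf_promote (by omega)

lemma isFrozen_promote_of_isFrozen (h : ¬ IsLinearExt L) {x : P} (hx : IsFrozen L x) :
    IsFrozen (promote L) x := by
  have hlabel := le_labelOf_promote le_rfl hx
  have hlt := frozenA_lt_frozenA_promote h
  have hle := (frozenA_mem (promote L)).1
  unfold IsFrozen
  omega

end FrozenPromote

/-- If `L` is not a linear extension, then the set of elements frozen
with respect to `L` is a proper subset of the set of elements frozen with respect
to `∂(L)`. -/
theorem frozen_ssubset_frozen_promote (L : Labeling P) (h : ¬ IsLinearExt L) :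
    {x : P | IsFrozen L x} ⊂ {x : P | IsFrozen (promote L) x} := by
  refine Set.ssubset_iff_subset_ne.2 ⟨fun _ => isFrozen_promote_of_isFrozen h, fun heq => ?_⟩
  have hcard := congrArg Set.ncard heq
  rw [ncard_setOf_isFrozen, ncard_setOf_isFrozen] at hcard
  exact (frozenA_lt_frozenA_promote h).ne hcard

end
end

section
/- Let P be an n-element poset, L a labeling of P, and write L_γ = ∂^γ(L). For all γ, j ∈ {1,…,n} with j + γ ≤ n, the elements L⁻¹(j+γ) and L_γ⁻¹(j) belong to the same connected component of P. -/
open scoped Classical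

noncomputable section

variable {P : Type*} [Fintype P] [PartialOrder P]

/-
Proof idea: one promotion step lowers every label by one, except on the promotion chain, which it
rotates. The chain is totally ordered, so the element that receives label `j` is equal or comparable
to the one that carried label `j + 1`. Iterating `γ` times yields a path in the comparability graph.
-/

lemma compGraph_reachable_of_mem_of_isChain {α : Type*} [PartialOrder α] {l : List α}
    (hl : l.IsChain (· < ·)) {x y : α} (hx : x ∈ l) (hy : y ∈ l) :
    (compGraph α).Reachable x y := by
  rcases eq_or_ne x y with rfl | hne
  · rfl
  · have hadj : l.Pairwise (compGraph α).Adj := hl.pairwise.imp fun h => ⟨h.ne, Or.inl h.le⟩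
    have := (compGraph α).symm
    exact (hadj.forall hx hy hne).reachable

lemma compGraph_reachable_formPerm_symm_apply {α : Type*} [PartialOrder α] [DecidableEq α]
    {l : List α} (hl : l.IsChain (· < ·)) (x : α) :
    (compGraph α).Reachable x (l.formPerm.symm x) := by
  by_cases hx : x ∈ l
  · exact compGraph_reachable_of_mem_of_isChain hl hx
      (List.mem_of_formPerm_apply_mem (by rwa [Equiv.apply_symm_apply]))
  · have hfix : l.formPerm.symm x = x := by
      rw [Equiv.symm_apply_eq, List.formPerm_apply_of_notMem hx]
    rw [hfix]

lemma finRotate_mk {n i : ℕ} (h : i + 1 < n) : finRotate n ⟨i, by omega⟩ = ⟨i + 1, h⟩ := by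
  obtain ⟨m, rfl⟩ : ∃ m, n = m + 1 := ⟨n - 1, by omega⟩
  exact finRotate_of_lt (by omega)

lemma promChainFrom_eq_cons (L : Labeling P) (v : P) : ∃ t, promChainFrom L v = v :: t := by
  rw [promChainFrom]
  split
  exacts [⟨_, rfl⟩, ⟨[], rfl⟩]

lemma promChainFrom_isChain (L : Labeling P) (v : P) : (promChainFrom L v).IsChain (· < ·) := by
  induction v using promChainFrom.induct L with
  | case1 v h ih =>
    obtain ⟨t, ht⟩ := promChainFrom_eq_cons L (lSucc L v h)
    rw [promChainFrom, dif_pos h, ht]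
    rw [ht] at ih
    exact List.isChain_cons_cons.mpr ⟨lt_lSucc L v h, ih⟩
  | case2 v h =>
    rw [promChainFrom, dif_neg h]
    exact List.isChain_singleton v

def promChain [Nonempty P] (L : Labeling P) : List P :=
  promChainFrom L (L.symm ⟨0, Fintype.card_pos⟩)

lemma promote_symm_apply [Nonempty P] (L : Labeling P) (i : Fin (Fintype.card P)) :
    (promote L).symm i = (promChain L).formPerm.symm (L.symm (finRotate _ i)) := by
  rw [promote, dif_pos ‹_›]
  rfl

lemma compGraph_reachable_promote_symm (L : Labeling P) (i : ℕ) (hi : i + 1 < Fintype.card P) :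
    (compGraph P).Reachable (L.symm ⟨i + 1, hi⟩) ((promote L).symm ⟨i, by omega⟩) := by
  have : Nonempty P := ⟨L.symm ⟨i, by omega⟩⟩
  rw [promote_symm_apply, finRotate_mk hi]
  exact compGraph_reachable_formPerm_symm_apply (promChainFrom_isChain L _) _

lemma compGraph_reachable_promote_iterate_symm (L : Labeling P) (γ i : ℕ)
    (h : i + γ < Fintype.card P) :
    (compGraph P).Reachable (L.symm ⟨i + γ, h⟩) ((promote^[γ] L).symm ⟨i, by omega⟩) := by
  induction γ generalizing i with
  | zero => rfl
  | succ γ ih =>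
    rw [Function.iterate_succ_apply']
    have hshift : (⟨i + (γ + 1), h⟩ : Fin (Fintype.card P)) = ⟨i + 1 + γ, by omega⟩ := by
      congr 1; omega
    rw [hshift]
    exact (ih (i + 1) _).trans (compGraph_reachable_promote_symm _ i (by omega))

/-- For `γ, j ∈ {1, …, n}` with `j + γ ≤ n`, the elements
`L⁻¹(j+γ)` and `(∂^γ L)⁻¹(j)` lie in the same connected component of `P`
(i.e. are reachable from one another in the comparability graph). -/
theorem same_component (L : Labeling P) (γ j : ℕ) (hj : 1 ≤ j)
    (hjγ : j + γ ≤ Fintype.card P) :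
    (compGraph P).Reachable (L.symm ⟨j + γ - 1, by omega⟩)
      ((promote^[γ] L).symm ⟨j - 1, by omega⟩) := by
  obtain ⟨i, rfl⟩ : ∃ i, j = i + 1 := ⟨j - 1, by omega⟩
  have hindex : i + 1 + γ - 1 = i + γ := by omega
  simpa only [hindex, Nat.add_sub_cancel] using
    compGraph_reachable_promote_iterate_symm L γ i (by omega)

end
end
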